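/- arXiv:1111.4635 — 2 statements merged into one kernel-verified Lean document; each statement's English description precedes it below -/
import Mathlib

section
/- Let f : ℤ₂ → ℤ₂ be a 1-Lipschitz map and let g : ℤ₂ → ℤ₂ be a derivative of f modulo 4 with parameter K. Then f is transitive if and only if f is transitive modulo 2^(K+2). -/
/-!
Modulo `2^n`, a 1-Lipschitz `f` induces a self-map of `ℤ/2^n`, and `f` is transitive modulo `2^n`
exactly when this map is a single cycle, of length `2^n`. If moreover
`f^[2^n] z ≡ z + 2^n (mod 2^(n+1))` for every `z`, each residue mod `2^n` splits into two residues
mod `2^(n+1)` that are visited alternately, so `f` is transitive modulo `2^(n+1)`.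

This congruence propagates from `n` to `n + 1` once `n ≥ K + 1`. Put `h = f^[2^n] z - z ≡ 2^n`.
By the chain rule, `f^[2^(n+1)] z = f^[2^n] (z + h) ≡ f^[2^n] z + h * P (mod 2^(n+2))` with
`P = ∏_{i < 2^n} g (f^[i] z)`. Every factor is a unit: otherwise `f (x + 2^K) ≡ f x` mod
`2^(K+1)`, while `f` is injective mod `2^(K+1)`. Since `g` is constant mod 4 on balls of radius `2^(-K)`, the second half of the product
repeats the first modulo 4, so `P` is the square of a unit mod 4, hence `P ≡ 1 (mod 4)` and
`f^[2^(n+1)] z ≡ z + 2h ≡ z + 2^(n+1) (mod 2^(n+2))`.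
The base case `n = K + 1` is transitivity modulo `2^(K+2)`: then `f^[2^(K+1)] z ≡ z` mod `2^(K+1)`
but not mod `2^(K+2)`.
-/

open Function Finset

/-- `a ≡ b (mod 2^s)` in the 2-adic integers. -/
def CongMod (s : ℕ) (a b : ℤ_[2]) : Prop := ‖a - b‖ ≤ ((2 : ℝ) ^ s)⁻¹

/-- `f` is 1-Lipschitz for the 2-adic norm (a T-function). -/
def OneLip (f : ℤ_[2] → ℤ_[2]) : Prop := ∀ a b : ℤ_[2], ‖f a - f b‖ ≤ ‖a - b‖

/-- `f` is transitive modulo `2^n`. -/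
def TransMod (f : ℤ_[2] → ℤ_[2]) (n : ℕ) : Prop :=
  ∀ x y : ℤ_[2], ∃ i < 2 ^ n, CongMod n (f^[i] x) y

/-- `f` is transitive (single cycle modulo every power of 2). -/
def TransitiveT (f : ℤ_[2] → ℤ_[2]) : Prop := ∀ n : ℕ, 1 ≤ n → TransMod f n

/-- `f` is bijective modulo `2^n`. -/
def BijMod (f : ℤ_[2] → ℤ_[2]) (n : ℕ) : Prop :=
  (∀ a b : ℤ_[2], CongMod n (f a) (f b) → CongMod n a b) ∧
  (∀ y : ℤ_[2], ∃ x : ℤ_[2], CongMod n (f x) y)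

/-- `f` is bijective (measure-preserving T-function). -/
def BijectiveT (f : ℤ_[2] → ℤ_[2]) : Prop := ∀ n : ℕ, 1 ≤ n → BijMod f n

/-- `g` is a derivative of `f` modulo `2^M` with parameter `K`. -/
def IsDerivMod (f g : ℤ_[2] → ℤ_[2]) (M K : ℕ) : Prop :=
  ∀ x h : ℤ_[2], ‖h‖ ≤ ((2 : ℝ) ^ K)⁻¹ →
    ‖f (x + h) - f x - g x * h‖ ≤ ((2 : ℝ) ^ M)⁻¹ * ‖h‖

/-- The `n`-th binary digit of a 2-adic integer, as an element of `ZMod 2`.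
`PadicInt.appr x n` is the unique integer in `{0, …, 2^n - 1}` congruent to `x` mod `2^n`. -/
noncomputable def delta (n : ℕ) (x : ℤ_[2]) : ZMod 2 :=
  (((x.appr (n + 1) - x.appr n) / 2 ^ n : ℕ) : ZMod 2)

section TransitiveMap

variable {α : Type*} {F : α → α}

def IsTransitiveMap (F : α → α) : Prop := ∀ a b : α, ∃ i, F^[i] a = b

variable [Finite α]

theorem IsTransitiveMap.minimalPeriod_eq (hF : IsTransitiveMap F) (a : α) :
    minimalPeriod F a = Nat.card α := by
  have ha : a ∈ periodicPts F := by
    obtain ⟨i, hi⟩ := hF (F a) a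
    exact ⟨i + 1, i.succ_pos, by rwa [IsPeriodicPt, IsFixedPt, iterate_succ_apply]⟩
  have hpos := minimalPeriod_pos_of_mem_periodicPts ha
  let orbit : Fin (minimalPeriod F a) → α := fun i => F^[i] a
  have h_surj : Surjective orbit := fun b => by
    obtain ⟨i, rfl⟩ := hF a b
    exact ⟨⟨i % minimalPeriod F a, Nat.mod_lt i hpos⟩, iterate_mod_minimalPeriod_eq⟩
  have h_inj : Injective orbit := fun i j hij =>
    Fin.ext (iterate_injOn_Iio_minimalPeriod i.isLt j.isLt hij)
  simpa using (Nat.card_le_card_of_injective orbit h_inj).antisymm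
    (Nat.card_le_card_of_surjective orbit h_surj)

theorem IsTransitiveMap.exists_iterate_lt_card_eq (hF : IsTransitiveMap F) (a b : α) :
    ∃ i < Nat.card α, F^[i] a = b := by
  obtain ⟨i, rfl⟩ := hF a b
  have hpos : 0 < minimalPeriod F a := by
    rw [hF.minimalPeriod_eq]
    have : Nonempty α := ⟨a⟩
    exact Nat.card_pos
  exact ⟨i % minimalPeriod F a, hF.minimalPeriod_eq a ▸ Nat.mod_lt i hpos,
    iterate_mod_minimalPeriod_eq⟩

theorem IsTransitiveMap.iterate_card (hF : IsTransitiveMap F) (a : α) :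
    F^[Nat.card α] a = a :=
  hF.minimalPeriod_eq a ▸ isPeriodicPt_minimalPeriod F a

theorem IsTransitiveMap.iterate_ne_self (hF : IsTransitiveMap F) (a : α) {i : ℕ} (hi₀ : i ≠ 0)
    (hi : i < Nat.card α) : F^[i] a ≠ a :=
  not_isPeriodicPt_of_pos_of_lt_minimalPeriod hi₀ (hF.minimalPeriod_eq a ▸ hi)

theorem IsTransitiveMap.injective (hF : IsTransitiveMap F) : Injective F :=
  Finite.injective_iff_surjective.mpr fun b => by
    obtain ⟨i, hi⟩ := hF (F b) b
    exact ⟨F^[i] b, by rwa [← iterate_succ_apply' F, iterate_succ_apply]⟩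

end TransitiveMap

theorem norm_le_inv_two_pow_iff_dvd (s : ℕ) (x : ℤ_[2]) :
    ‖x‖ ≤ ((2 : ℝ) ^ s)⁻¹ ↔ (2 : ℤ_[2]) ^ s ∣ x := by
  have := PadicInt.norm_le_pow_iff_mem_span_pow x s
  rwa [Ideal.mem_span_singleton, zpow_neg, zpow_natCast, Nat.cast_ofNat, Nat.cast_ofNat] at this

theorem congMod_iff_dvd (s : ℕ) (a b : ℤ_[2]) : CongMod s a b ↔ (2 : ℤ_[2]) ^ s ∣ a - b :=
  norm_le_inv_two_pow_iff_dvd s (a - b)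

theorem congMod_iff_toZModPow (s : ℕ) (a b : ℤ_[2]) :
    CongMod s a b ↔ PadicInt.toZModPow s a = PadicInt.toZModPow s b := by
  rw [← sub_eq_zero, ← map_sub, ← RingHom.mem_ker, PadicInt.ker_toZModPow,
    Ideal.mem_span_singleton, Nat.cast_ofNat, congMod_iff_dvd]

theorem CongMod.mono {m n : ℕ} {a b : ℤ_[2]} (h : CongMod n a b) (hmn : m ≤ n) :
    CongMod m a b :=
  (congMod_iff_dvd _ _ _).2 ((pow_dvd_pow 2 hmn).trans ((congMod_iff_dvd _ _ _).1 h))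

theorem two_pow_dvd_or_two_pow_dvd_sub {n : ℕ} {d : ℤ_[2]} (hd : 2 ^ n ∣ d) :
    2 ^ (n + 1) ∣ d ∨ 2 ^ (n + 1) ∣ d - 2 ^ n := by
  obtain ⟨w, rfl⟩ := hd
  obtain ⟨k, hk, hw⟩ := PadicInt.exists_mem_range w
  rw [PadicInt.maximalIdeal_eq_span_p, Ideal.mem_span_singleton, Nat.cast_ofNat] at hw
  rw [pow_succ]
  interval_cases k
  · left
    simpa using mul_dvd_mul_left (2 ^ n) hw
  · right
    simpa [mul_sub] using mul_dvd_mul_left (2 ^ n) hw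

theorem CongMod.succ_or {n : ℕ} {a b : ℤ_[2]} (h : CongMod n a b) :
    CongMod (n + 1) a b ∨ CongMod (n + 1) a (b + 2 ^ n) := by
  simp only [congMod_iff_dvd, ← sub_sub] at h ⊢
  exact two_pow_dvd_or_two_pow_dvd_sub h

theorem OneLip.congMod {f : ℤ_[2] → ℤ_[2]} (hf : OneLip f) {n : ℕ} {a b : ℤ_[2]}
    (h : CongMod n a b) : CongMod n (f a) (f b) :=
  (hf a b).trans h

section Reduction

variable {f : ℤ_[2] → ℤ_[2]} {n : ℕ}

-- Independent of the chosen lift `a.val` when `f` is 1-Lipschitz.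
noncomputable def reduceMod (f : ℤ_[2] → ℤ_[2]) (n : ℕ) (a : ZMod (2 ^ n)) : ZMod (2 ^ n) :=
  PadicInt.toZModPow n (f a.val)

theorem toZModPow_natCast_val (a : ZMod (2 ^ n)) : PadicInt.toZModPow n (a.val : ℤ_[2]) = a := by
  rw [map_natCast, ZMod.natCast_zmod_val]

theorem iterate_reduceMod_toZModPow (hf : OneLip f) (i : ℕ) (x : ℤ_[2]) :
    (reduceMod f n)^[i] (PadicInt.toZModPow n x) = PadicInt.toZModPow n (f^[i] x) := by
  induction i with
  | zero => rfl
  | succ i ih =>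
    rw [iterate_succ_apply', ih, iterate_succ_apply', reduceMod, ← congMod_iff_toZModPow]
    exact hf.congMod ((congMod_iff_toZModPow _ _ _).2 (toZModPow_natCast_val _))

theorem isTransitiveMap_reduceMod_iff (hf : OneLip f) :
    IsTransitiveMap (reduceMod f n) ↔ ∀ x y : ℤ_[2], ∃ i, CongMod n (f^[i] x) y := by
  simp only [congMod_iff_toZModPow, ← iterate_reduceMod_toZModPow hf]
  refine ⟨fun hF x y => hF _ _, fun H a b => ?_⟩
  simpa only [toZModPow_natCast_val] using H a.val b.val

theorem transMod_iff_isTransitiveMap (hf : OneLip f) :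
    TransMod f n ↔ IsTransitiveMap (reduceMod f n) := by
  refine ⟨fun hT => (isTransitiveMap_reduceMod_iff hf).2 fun x y => ?_, fun hF x y => ?_⟩
  · obtain ⟨i, -, hi⟩ := hT x y
    exact ⟨i, hi⟩
  · obtain ⟨i, hi, hxy⟩ := hF.exists_iterate_lt_card_eq (PadicInt.toZModPow n x)
      (PadicInt.toZModPow n y)
    rw [Nat.card_zmod] at hi
    rw [iterate_reduceMod_toZModPow hf, ← congMod_iff_toZModPow] at hxy
    exact ⟨i, hi, hxy⟩

theorem TransMod.mono (hf : OneLip f) {m : ℕ} (hT : TransMod f n) (hmn : m ≤ n) :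
    TransMod f m := by
  rw [transMod_iff_isTransitiveMap hf, isTransitiveMap_reduceMod_iff hf] at hT ⊢
  intro x y
  obtain ⟨i, hi⟩ := hT x y
  exact ⟨i, hi.mono hmn⟩

theorem TransMod.iterate_two_pow_congMod (hf : OneLip f) (hT : TransMod f n) (x : ℤ_[2]) :
    CongMod n (f^[2 ^ n] x) x := by
  rw [transMod_iff_isTransitiveMap hf] at hT
  have := hT.iterate_card (PadicInt.toZModPow n x)
  rwa [Nat.card_zmod, iterate_reduceMod_toZModPow hf, ← congMod_iff_toZModPow] at this

theorem TransMod.not_congMod_iterate_two_pow (hf : OneLip f) (hT : TransMod f (n + 1))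
    (x : ℤ_[2]) : ¬ CongMod (n + 1) (f^[2 ^ n] x) x := by
  rw [transMod_iff_isTransitiveMap hf] at hT
  have := hT.iterate_ne_self (PadicInt.toZModPow (n + 1) x) (pow_ne_zero n two_ne_zero)
    (by rw [Nat.card_zmod]; exact Nat.pow_lt_pow_succ one_lt_two)
  rwa [iterate_reduceMod_toZModPow hf, ne_eq, ← congMod_iff_toZModPow] at this

theorem TransMod.congMod_of_congMod_apply (hf : OneLip f) (hT : TransMod f n) {a b : ℤ_[2]}
    (h : CongMod n (f a) (f b)) : CongMod n a b := by
  rw [transMod_iff_isTransitiveMap hf] at hT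
  rw [congMod_iff_toZModPow] at h ⊢
  have reduceMod_toZModPow := iterate_reduceMod_toZModPow hf (n := n) 1
  rw [iterate_one] at reduceMod_toZModPow
  apply hT.injective
  rwa [reduceMod_toZModPow, reduceMod_toZModPow]

end Reduction

section Derivative

variable {f g : ℤ_[2] → ℤ_[2]} {M K : ℕ}

theorem IsDerivMod.comp {f₁ g₁ f₂ g₂ : ℤ_[2] → ℤ_[2]} (h₁ : IsDerivMod f₁ g₁ M K)
    (h₂ : IsDerivMod f₂ g₂ M K) : IsDerivMod (f₁ ∘ f₂) (fun x => g₁ (f₂ x) * g₂ x) M K := by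
  intro x h hh
  have hM : ((2 : ℝ) ^ M)⁻¹ ≤ 1 := inv_le_one_of_one_le₀ (one_le_pow₀ one_le_two)
  have hE₂ : ‖f₂ (x + h) - f₂ x - g₂ x * h‖ ≤ ‖h‖ :=
    (h₂ x h hh).trans (mul_le_of_le_one_left (norm_nonneg h) hM)
  set k := f₂ (x + h) - f₂ x
  have hk : ‖k‖ ≤ ‖h‖ := by
    have hgh : ‖g₂ x * h‖ ≤ ‖h‖ := by
      rw [norm_mul]
      exact mul_le_of_le_one_left (norm_nonneg h) (PadicInt.norm_le_one _)
    simpa using (IsUltrametricDist.norm_add_le_max (k - g₂ x * h) (g₂ x * h)).trans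
      (max_le hE₂ hgh)
  have hE₁ := h₁ (f₂ x) k (hk.trans hh)
  have hsplit : f₁ (f₂ (x + h)) - f₁ (f₂ x) - g₁ (f₂ x) * g₂ x * h =
      (f₁ (f₂ x + k) - f₁ (f₂ x) - g₁ (f₂ x) * k) + g₁ (f₂ x) * (k - g₂ x * h) := by
    rw [add_sub_cancel]
    ring
  rw [comp_apply, comp_apply, hsplit]
  refine (IsUltrametricDist.norm_add_le_max _ _).trans (max_le ?_ ?_)
  · exact hE₁.trans (mul_le_mul_of_nonneg_left hk (by positivity))
  · rw [norm_mul]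
    exact mul_le_of_le_one_left (norm_nonneg _) (PadicInt.norm_le_one _) |>.trans (h₂ x h hh)

theorem IsDerivMod.iterate (hf : IsDerivMod f g M K) (j : ℕ) :
    IsDerivMod f^[j] (fun x => ∏ i ∈ range j, g (f^[i] x)) M K := by
  induction j with
  | zero => intro x h _; simp
  | succ j ih =>
    rw [iterate_succ']
    simpa only [prod_range_succ, mul_comm] using hf.comp ih

theorem IsDerivMod.two_pow_dvd (hg : IsDerivMod f g M K) {n : ℕ} (hn : K ≤ n) (x : ℤ_[2])
    {h : ℤ_[2]} (hh : 2 ^ n ∣ h) : 2 ^ (M + n) ∣ f (x + h) - f x - g x * h := by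
  rw [← norm_le_inv_two_pow_iff_dvd] at hh ⊢
  have hK : ((2 : ℝ) ^ n)⁻¹ ≤ ((2 : ℝ) ^ K)⁻¹ :=
    inv_anti₀ (by positivity) (pow_le_pow_right₀ one_le_two hn)
  calc _ ≤ ((2 : ℝ) ^ M)⁻¹ * ‖h‖ := hg x h (hh.trans hK)
    _ ≤ ((2 : ℝ) ^ M)⁻¹ * ((2 : ℝ) ^ n)⁻¹ := by gcongr
    _ = ((2 : ℝ) ^ (M + n))⁻¹ := by rw [pow_add, mul_inv]

theorem IsDerivMod.congMod (hg : IsDerivMod f g M K) {x y : ℤ_[2]} (hxy : CongMod K x y) :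
    CongMod M (g x) (g y) := by
  rw [congMod_iff_dvd] at hxy ⊢
  obtain ⟨h, rfl⟩ : ∃ h, x = y + h := ⟨x - y, by ring⟩
  rw [add_sub_cancel_left] at hxy
  have hE₁ := hg.two_pow_dvd le_rfl y (dvd_add hxy (dvd_refl (2 ^ K)))
  have hE₂ := hg.two_pow_dvd le_rfl y hxy
  have hE₃ := hg.two_pow_dvd le_rfl (y + h) (dvd_refl (2 ^ K))
  have hsplit : (g (y + h) - g y) * 2 ^ K = (f (y + (h + 2 ^ K)) - f y - g y * (h + 2 ^ K)) -
      (f (y + h) - f y - g y * h) - (f (y + h + 2 ^ K) - f (y + h) - g (y + h) * 2 ^ K) := by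
    rw [add_assoc]
    ring
  rw [← mul_dvd_mul_iff_right (pow_ne_zero K two_ne_zero), ← pow_add, hsplit]
  exact dvd_sub (dvd_sub hE₁ hE₂) hE₃

theorem IsDerivMod.isUnit (hg : IsDerivMod f g M K) (hM : 1 ≤ M) (hf : OneLip f)
    (hT : TransMod f (K + 1)) (x : ℤ_[2]) : IsUnit (g x) := by
  by_contra hx
  rw [PadicInt.not_isUnit_iff, PadicInt.norm_lt_one_iff_dvd, Nat.cast_ofNat] at hx
  have hE := hg.two_pow_dvd le_rfl x (dvd_refl (2 ^ K))
  have hfx : CongMod (K + 1) (f (x + 2 ^ K)) (f x) := by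
    rw [congMod_iff_dvd, ← sub_add_cancel (f (x + 2 ^ K) - f x) (g x * 2 ^ K)]
    exact dvd_add ((pow_dvd_pow 2 (by omega)).trans hE)
      (by rw [pow_succ']; exact mul_dvd_mul_right hx _)
  have h2 := (congMod_iff_dvd _ _ _).1 (hT.congMod_of_congMod_apply hf hfx)
  have h2_nonunit : ¬IsUnit (2 : ℤ_[2]) := by
    simpa using mem_nonunits_iff.1 (PadicInt.p_nonunit (p := 2))
  rw [add_sub_cancel_left, pow_dvd_pow_iff two_ne_zero h2_nonunit] at h2
  omega

end Derivative

section Lifting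

variable {f g : ℤ_[2] → ℤ_[2]} {K n : ℕ}

def ShiftsByTwoPow (f : ℤ_[2] → ℤ_[2]) (n : ℕ) : Prop :=
  ∀ z : ℤ_[2], CongMod (n + 1) (f^[2 ^ n] z) (z + 2 ^ n)

theorem TransMod.shiftsByTwoPow (hf : OneLip f) (hT : TransMod f (n + 1)) :
    ShiftsByTwoPow f n := fun z =>
  (((hT.mono hf n.le_succ).iterate_two_pow_congMod hf z).succ_or).resolve_left
    (hT.not_congMod_iterate_two_pow hf z)

theorem ShiftsByTwoPow.transMod_succ (hS : ShiftsByTwoPow f n) (hT : TransMod f n) :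
    TransMod f (n + 1) := by
  intro x y
  obtain ⟨i, hi, hxy⟩ := hT x y
  rcases hxy.succ_or with hxy | hxy
  · exact ⟨i, hi.trans (Nat.pow_lt_pow_succ one_lt_two), hxy⟩
  · refine ⟨2 ^ n + i, by rw [pow_succ]; omega, ?_⟩
    have hshift := (congMod_iff_dvd _ _ _).1 (hS (f^[i] x))
    rw [congMod_iff_dvd] at hxy ⊢
    rw [iterate_add_apply, show f^[2 ^ n] (f^[i] x) - y = (f^[2 ^ n] (f^[i] x) - (f^[i] x + 2 ^ n))
      + (f^[i] x - (y + 2 ^ n)) + 2 ^ (n + 1) by ring]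
    exact dvd_add (dvd_add hshift hxy) dvd_rfl

theorem units_zmod_four_mul_self (u : (ZMod (2 ^ 2))ˣ) : u * u = 1 := by
  revert u
  decide

theorem prod_iterate_congMod_one (hf : OneLip f) (hg : IsDerivMod f g 2 K)
    (hT : TransMod f (n + 1)) (hn : K ≤ n) (x : ℤ_[2]) :
    CongMod 2 (∏ i ∈ range (2 ^ (n + 1)), g (f^[i] x)) 1 := by
  have hperiodic (i : ℕ) : CongMod 2 (g (f^[2 ^ n + i] x)) (g (f^[i] x)) := by
    rw [iterate_add_apply]
    exact hg.congMod (((hT.mono hf n.le_succ).iterate_two_pow_congMod hf _).mono hn)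
  have hunit : IsUnit (PadicInt.toZModPow 2 (∏ i ∈ range (2 ^ n), g (f^[i] x))) :=
    (IsUnit.prod_iff.2 fun i _ => hg.isUnit one_le_two hf (hT.mono hf (by omega)) _).map _
  obtain ⟨u, hu⟩ := hunit
  rw [pow_succ, mul_two, prod_range_add, congMod_iff_toZModPow, map_mul, map_one]
  simp only [congMod_iff_toZModPow] at hperiodic
  rw [map_prod, map_prod, prod_congr rfl fun i _ => hperiodic i, ← map_prod, ← hu,
    ← Units.val_mul, units_zmod_four_mul_self, Units.val_one]

theorem ShiftsByTwoPow.succ (hg : IsDerivMod f g 2 K) (hn : K ≤ n) (hS : ShiftsByTwoPow f n)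
    (hP : ∀ z, CongMod 2 (∏ i ∈ range (2 ^ n), g (f^[i] z)) 1) :
    ShiftsByTwoPow f (n + 1) := by
  intro z
  obtain ⟨h, hz⟩ : ∃ h, f^[2 ^ n] z = z + h := ⟨_, (add_sub_cancel z _).symm⟩
  set P := ∏ i ∈ range (2 ^ n), g (f^[i] z)
  have hshift : 2 ^ (n + 1) ∣ h - 2 ^ n := by
    simpa only [hz, congMod_iff_dvd, add_sub_add_left_eq_sub] using hS z
  have hh : 2 ^ n ∣ h := by
    simpa using dvd_add ((pow_dvd_pow 2 n.le_succ).trans hshift) (dvd_refl (2 ^ n))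
  have hA := (hg.iterate (2 ^ n)).two_pow_dvd hn z hh
  have hP1 := (congMod_iff_dvd _ _ _).1 (hP z)
  have hsplit : f^[2 ^ (n + 1)] z - (z + 2 ^ (n + 1)) =
      (f^[2 ^ n] (z + h) - f^[2 ^ n] z - P * h) + h * (P - 1) + 2 * (h - 2 ^ n) := by
    rw [pow_succ, mul_two, iterate_add_apply, hz]
    ring
  rw [congMod_iff_dvd, hsplit]
  refine dvd_add (dvd_add ?_ ?_) ?_
  · rwa [Nat.add_comm 2 n] at hA
  · rw [show (2 : ℤ_[2]) ^ (n + 1 + 1) = 2 ^ n * 2 ^ 2 by ring]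
    exact mul_dvd_mul hh hP1
  · rw [pow_succ']
    exact mul_dvd_mul_left 2 hshift

theorem transMod_succ (hf : OneLip f) (hg : IsDerivMod f g 2 K) (hn : K + 2 ≤ n)
    (hT : TransMod f n) : TransMod f (n + 1) := by
  obtain ⟨m, rfl⟩ : ∃ m, n = m + 2 := ⟨n - 2, by omega⟩
  have hP := prod_iterate_congMod_one hf hg (hT.mono hf (by omega)) (by omega : K ≤ m)
  exact ((hT.shiftsByTwoPow hf).succ hg (by omega) hP).transMod_succ hT

end Lifting

/-- Transitivity criterion for a T-function uniformly differentiable modulo 4. -/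
theorem transitivity_criterion (f g : ℤ_[2] → ℤ_[2]) (K : ℕ)
    (hf : OneLip f) (hg : IsDerivMod f g 2 K) :
    TransitiveT f ↔ TransMod f (K + 2) := by
  refine ⟨fun hT => hT (K + 2) (by omega), fun hT n _ => ?_⟩
  rcases le_total n (K + 2) with hn | hn
  · exact hT.mono hf hn
  · exact Nat.le_induction hT (fun m hm => transMod_succ hf hg hm) n hn
end

section
/- (Independence of coordinate sequences.) For every family of binary sequences ζ : ℕ → ℕ → ℤ/2ℤ there exist a 1-Lipschitz transitive map f : ℤ₂ → ℤ₂ and a point x₀ ∈ ℤ₂ such that for every i ∈ ℕ and every j with 0 ≤ j < 2^i one has δ_i(f^[j](x₀)) = ζ(i)(j). (That is, the first half-period of every i-th coordinate sequence of the orbit of x₀ under f can be prescribed arbitrarily.) -/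
open Function Finset

/-!
Let `φ = twist ζ` be the map of `ℤ₂` whose `i`-th digit at `t` is `δ_i(t) + ζ i (r_i(t))`.
Its residue mod `2^n` depends only on `r_n(t)`, and the `i`-th digit of `t` can be recovered from
those of `φ t` by induction on `i`; so `φ` preserves and reflects every congruence mod `2^n`. Such
a map is bijective on each `ℤ/2^n`, hence has dense and (by compactness) closed image, so it is a
bijection. Conjugating the odometer `t ↦ t + 1`, which is transitive, by `φ` gives a transitive
T-function `f` with `f^[j] (φ 0) = φ j`, and for `j < 2^i` the `i`-th digit of `φ j` is `ζ i j`
because `j` has no `i`-th digit.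
-/

namespace PadicInt

variable {p : ℕ} [Fact p.Prime]

theorem appr_eq_iff_toZModPow_eq {x : ℤ_[p]} {n m : ℕ} (hm : m < p ^ n) :
    x.appr n = m ↔ toZModPow n x = m := by
  change _ ↔ ((x.appr n : ℕ) : ZMod (p ^ n)) = m
  rw [ZMod.natCast_eq_natCast_iff', Nat.mod_eq_of_lt (x.appr_lt n), Nat.mod_eq_of_lt hm]

theorem appr_natCast_of_lt {n m : ℕ} (hm : m < p ^ n) : (m : ℤ_[p]).appr n = m :=
  (appr_eq_iff_toZModPow_eq hm).mpr (map_natCast _ m)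

theorem appr_mod_pow (x : ℤ_[p]) {m n : ℕ} (h : m ≤ n) : x.appr n % p ^ m = x.appr m := by
  obtain ⟨c, hc⟩ := x.dvd_appr_sub_appr m n h
  rw [← Nat.sub_add_cancel (x.appr_mono h), hc, Nat.mul_add_mod, Nat.mod_eq_of_lt (x.appr_lt m)]

end PadicInt

open PadicInt

theorem congMod_iff_toZModPow_eq {n : ℕ} {a b : ℤ_[2]} :
    CongMod n a b ↔ toZModPow n a = toZModPow n b := by
  rw [CongMod, ← RingHom.sub_mem_ker_iff, ker_toZModPow, ← norm_le_pow_iff_mem_span_pow,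
    zpow_neg, zpow_natCast, Nat.cast_ofNat]

theorem congMod_iff_appr_eq {n : ℕ} {a b : ℤ_[2]} : CongMod n a b ↔ a.appr n = b.appr n := by
  rw [congMod_iff_toZModPow_eq, appr_eq_iff_toZModPow_eq (b.appr_lt n)]
  rfl

theorem eq_of_forall_congMod {a b : ℤ_[2]} (h : ∀ n, CongMod n a b) : a = b :=
  ext_of_toZModPow.mp fun n => congMod_iff_toZModPow_eq.mp (h n)

theorem congMod_add_right_iff {n : ℕ} {a b : ℤ_[2]} (c : ℤ_[2]) :
    CongMod n (a + c) (b + c) ↔ CongMod n a b := by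
  rw [CongMod, CongMod, add_sub_add_right_eq_sub]

theorem oneLip_of_congMod {f : ℤ_[2] → ℤ_[2]}
    (hf : ∀ n a b, CongMod n a b → CongMod n (f a) (f b)) : OneLip f := by
  intro a b
  rcases eq_or_ne a b with rfl | hab
  · simp
  have hnorm : ‖a - b‖ = ((2 : ℝ) ^ (a - b).valuation)⁻¹ := by
    rw [norm_eq_zpow_neg_valuation (sub_ne_zero.mpr hab)]
    simp
  rw [hnorm]
  exact hf _ a b hnorm.le

theorem delta_eq_of_appr_succ {x : ℤ_[2]} {n : ℕ} {b : ZMod 2}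
    (h : x.appr (n + 1) = x.appr n + b.val * 2 ^ n) : delta n x = b := by
  rw [delta, h, Nat.add_sub_cancel_left, Nat.mul_div_cancel _ (by positivity),
    ZMod.natCast_zmod_val]

section Twist

variable (ζ : ℕ → ℕ → ZMod 2)

def twistDigit (i m : ℕ) : ZMod 2 := ζ i (m % 2 ^ i) + ((m / 2 ^ i : ℕ) : ZMod 2)

def twistRes (n m : ℕ) : ℕ := ∑ i ∈ range n, (twistDigit ζ i m).val * 2 ^ i

theorem twistDigit_mod_pow {i n : ℕ} (h : i < n) (m : ℕ) :
    twistDigit ζ i (m % 2 ^ n) = twistDigit ζ i m := by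
  have hbit : m % 2 ^ n / 2 ^ i % 2 = m / 2 ^ i % 2 := by
    rw [← Nat.mod_mul_right_div_self, ← Nat.mod_mul_right_div_self m, ← pow_succ,
      Nat.mod_mod_of_dvd _ (pow_dvd_pow 2 h)]
  rw [twistDigit, twistDigit, Nat.mod_mod_of_dvd _ (pow_dvd_pow 2 h.le),
    ← ZMod.natCast_mod (m % 2 ^ n / 2 ^ i), hbit, ZMod.natCast_mod]

theorem twistDigit_of_lt {i j : ℕ} (hj : j < 2 ^ i) : twistDigit ζ i j = ζ i j := by
  simp [twistDigit, Nat.mod_eq_of_lt hj, Nat.div_eq_of_lt hj]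

theorem twistRes_succ (n m : ℕ) :
    twistRes ζ (n + 1) m = twistRes ζ n m + (twistDigit ζ n m).val * 2 ^ n :=
  sum_range_succ _ _

theorem twistRes_lt (n m : ℕ) : twistRes ζ n m < 2 ^ n := by
  induction n with
  | zero => simp [twistRes]
  | succ n ih =>
    have hdigit : (twistDigit ζ n m).val * 2 ^ n ≤ 1 * 2 ^ n :=
      Nat.mul_le_mul_right _ (Nat.le_of_lt_succ (ZMod.val_lt _))
    rw [twistRes_succ, pow_succ]
    omega

theorem twistRes_mod_pow (n m : ℕ) : twistRes ζ n (m % 2 ^ n) = twistRes ζ n m :=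
  sum_congr rfl fun _ hi => by rw [twistDigit_mod_pow ζ (mem_range.mp hi)]

theorem twistRes_eq_iff {n m m' : ℕ} :
    twistRes ζ n m = twistRes ζ n m' ↔ m % 2 ^ n = m' % 2 ^ n := by
  refine ⟨fun h => ?_, fun h => by rw [← twistRes_mod_pow, h, twistRes_mod_pow]⟩
  induction n with
  | zero => simp [Nat.mod_one]
  | succ n ih =>
    rw [twistRes_succ, twistRes_succ] at h
    have hpow : 0 < 2 ^ n := by positivity
    have hlow : twistRes ζ n m = twistRes ζ n m' := by
      have h' := congrArg (· % 2 ^ n) h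
      simp only [Nat.add_mul_mod_self_right] at h'
      rwa [Nat.mod_eq_of_lt (twistRes_lt ζ n _), Nat.mod_eq_of_lt (twistRes_lt ζ n _)] at h'
    have hdigit : twistDigit ζ n m = twistDigit ζ n m' := by
      have h' := congrArg (· / 2 ^ n) h
      simp only [Nat.add_mul_div_right _ _ hpow, Nat.div_eq_of_lt (twistRes_lt ζ n _)] at h'
      exact ZMod.val_injective _ (by omega)
    have hmod := ih hlow
    rw [twistDigit, twistDigit, hmod, add_right_inj, ZMod.natCast_eq_natCast_iff'] at hdigit
    rw [Nat.mod_pow_succ, Nat.mod_pow_succ, hmod, hdigit]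

theorem twistRes_appr_dvd (t : ℤ_[2]) (i : ℕ) :
    ((2 : ℕ) : ℤ) ^ i ∣
      (twistRes ζ (i + 1) (t.appr (i + 1)) : ℤ) - twistRes ζ i (t.appr i) := by
  rw [twistRes_succ, ← twistRes_mod_pow ζ i (t.appr (i + 1)), appr_mod_pow t i.le_succ]
  exact ⟨(twistDigit ζ i (t.appr (i + 1))).val, by push_cast; ring⟩

noncomputable def twist (t : ℤ_[2]) : ℤ_[2] :=
  ofIntSeq _ <| isCauSeq_padicNorm_of_pow_dvd_sub (fun n => (twistRes ζ n (t.appr n) : ℤ)) 2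
    (twistRes_appr_dvd ζ t)

theorem appr_twist (t : ℤ_[2]) (n : ℕ) : (twist ζ t).appr n = twistRes ζ n (t.appr n) := by
  rw [appr_eq_iff_toZModPow_eq (twistRes_lt ζ n _), twist,
    toZModPow_ofIntSeq_of_pow_dvd_sub _ _ (twistRes_appr_dvd ζ t), Int.cast_natCast]

theorem congMod_twist_iff (n : ℕ) (a b : ℤ_[2]) :
    CongMod n (twist ζ a) (twist ζ b) ↔ CongMod n a b := by
  rw [congMod_iff_appr_eq, congMod_iff_appr_eq, appr_twist, appr_twist, twistRes_eq_iff,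
    Nat.mod_eq_of_lt (a.appr_lt n), Nat.mod_eq_of_lt (b.appr_lt n)]

theorem delta_twist_natCast {i j : ℕ} (hj : j < 2 ^ i) : delta i (twist ζ j) = ζ i j := by
  have hj' : j < 2 ^ (i + 1) := hj.trans (Nat.pow_lt_pow_right one_lt_two i.lt_succ_self)
  apply delta_eq_of_appr_succ
  rw [appr_twist, appr_twist, appr_natCast_of_lt hj, appr_natCast_of_lt hj', twistRes_succ,
    twistDigit_of_lt ζ hj]

end Twist

section CongruencePreserving

variable {φ : ℤ_[2] → ℤ_[2]} (hφ : ∀ n a b, CongMod n (φ a) (φ b) ↔ CongMod n a b)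
include hφ

theorem injective_of_congMod_iff : Injective φ := fun a b h =>
  eq_of_forall_congMod fun n => (hφ n a b).mp (congMod_iff_appr_eq.mpr (congrArg (appr · n) h))

theorem exists_congMod_of_congMod_iff (n : ℕ) (y : ℤ_[2]) : ∃ t, CongMod n (φ t) y := by
  have hinj : ∀ m m' (hm : m ∈ range (2 ^ n)) (hm' : m' ∈ range (2 ^ n)),
      (φ m).appr n = (φ m').appr n → m = m' := by
    intro m m' hm hm' h
    rw [← congMod_iff_appr_eq, hφ, congMod_iff_appr_eq, appr_natCast_of_lt (mem_range.mp hm),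
      appr_natCast_of_lt (mem_range.mp hm')] at h
    exact h
  obtain ⟨m, -, hm⟩ := surj_on_of_inj_on_of_card_le (fun (m : ℕ) _ => (φ m).appr n)
    (fun m _ => mem_range.mpr (appr_lt _ n)) hinj le_rfl (y.appr n) (mem_range.mpr (appr_lt y n))
  exact ⟨m, congMod_iff_appr_eq.mpr hm.symm⟩

theorem surjective_of_congMod_iff : Surjective φ := by
  have hcont : Continuous φ := LipschitzWith.continuous (K := 1) <|
    LipschitzWith.of_dist_le_mul fun a b => by
      simpa [dist_eq_norm] using oneLip_of_congMod (fun n a b => (hφ n a b).mpr) a b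
  intro y
  rw [← Set.mem_range, ← (isCompact_range hcont).isClosed.closure_eq, Metric.mem_closure_iff]
  intro ε hε
  obtain ⟨n, hn⟩ := exists_pow_lt_of_lt_one hε (by norm_num : (1 / 2 : ℝ) < 1)
  obtain ⟨t, ht⟩ := exists_congMod_of_congMod_iff hφ n y
  refine ⟨φ t, Set.mem_range_self t, ?_⟩
  rw [dist_eq_norm, norm_sub_rev]
  exact ht.trans_lt (by simpa using hn)

end CongruencePreserving

noncomputable def conjOdometer (e : ℤ_[2] ≃ ℤ_[2]) (x : ℤ_[2]) : ℤ_[2] := e (e.symm x + 1)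

theorem iterate_conjOdometer (e : ℤ_[2] ≃ ℤ_[2]) (x : ℤ_[2]) (j : ℕ) :
    (conjOdometer e)^[j] x = e (e.symm x + j) := by
  induction j with
  | zero => simp
  | succ j ih =>
    rw [iterate_succ_apply', ih, conjOdometer, e.symm_apply_apply, Nat.cast_succ, add_assoc]

section

variable {e : ℤ_[2] ≃ ℤ_[2]} (he : ∀ n a b, CongMod n (e a) (e b) ↔ CongMod n a b)
include he

theorem congMod_symm_apply {n : ℕ} {a b : ℤ_[2]} (h : CongMod n a b) :
    CongMod n (e.symm a) (e.symm b) := by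
  rwa [← he, e.apply_symm_apply, e.apply_symm_apply]

theorem oneLip_conjOdometer : OneLip (conjOdometer e) :=
  oneLip_of_congMod fun n _ _ h =>
    (he n _ _).mpr ((congMod_add_right_iff 1).mpr (congMod_symm_apply he h))

theorem transitiveT_conjOdometer : TransitiveT (conjOdometer e) := by
  intro n _ x y
  set d := e.symm y - e.symm x
  refine ⟨d.appr n, d.appr_lt n, ?_⟩
  rw [iterate_conjOdometer, ← e.apply_symm_apply y, he, ← sub_add_cancel (e.symm y) (e.symm x),
    add_comm (e.symm x), congMod_add_right_iff, congMod_iff_appr_eq,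
    appr_natCast_of_lt (d.appr_lt n)]

end

/-- Independence of coordinate sequences: the first half-period of every coordinate
sequence can be prescribed arbitrarily by some transitive T-function and initial point. -/
theorem coordinate_sequences_independent (ζ : ℕ → ℕ → ZMod 2) :
    ∃ f : ℤ_[2] → ℤ_[2], ∃ x₀ : ℤ_[2], OneLip f ∧ TransitiveT f ∧
      ∀ i : ℕ, ∀ j : ℕ, j < 2 ^ i → delta i (f^[j] x₀) = ζ i j := by
  have hφ := congMod_twist_iff ζ
  let e := Equiv.ofBijective (twist ζ)
    ⟨injective_of_congMod_iff hφ, surjective_of_congMod_iff hφ⟩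
  refine ⟨conjOdometer e, e 0, oneLip_conjOdometer hφ, transitiveT_conjOdometer hφ, ?_⟩
  intro i j hj
  rw [iterate_conjOdometer, e.symm_apply_apply, zero_add]
  exact delta_twist_natCast ζ hj
end
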